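/- arXiv:1601.00024 — 5 statements merged into one kernel-verified Lean document; each statement's English description precedes it below -/
import Mathlib

section
/- Let u : [N] → [0,1] be non-increasing, f* ∈ [0,1], and define n* := N if u(N) ≥ f*, else n* := min{ℓ : u(ℓ) < f*}. Suppose an allocation process to a learner starts with allocation b, multiplies the allocation by at most r > 1 in each step, and only makes a further allocation when its current allocation n satisfies u(n) ≥ f*. Then every allocation made is strictly less than r·n*. -/
/-- DAUB* single-learner allocation bound: if allocations start at `b ≤ n*`,
grow by a factor at most `r` each step, and a further allocation is only made
when the non-increasing upper bound `u` at the current allocation is at least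
the target `f*`, then every allocation is strictly less than `r * n*`. -/
theorem stmt_6 (N : ℕ) (u : ℕ → ℝ) (hu : Antitone u)
    (fstar : ℝ) (r : ℝ) (hr : 1 < r)
    (nstar b : ℕ) (hb : 1 ≤ b) (hbn : b ≤ nstar)
    (hstar : (fstar ≤ u N ∧ nstar = N) ∨
      (u nstar < fstar ∧ ∀ ℓ, 1 ≤ ℓ → ℓ < nstar → fstar ≤ u ℓ))
    (a : ℕ → ℕ) (k : ℕ) (ha0 : a 0 = b)
    (haN : ∀ i, i ≤ k → a i ≤ N)
    (hgrow : ∀ i, i < k → (a (i + 1) : ℝ) ≤ r * a i)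
    (hcond : ∀ i, i < k → fstar ≤ u (a i)) :
    ∀ i, i ≤ k → (a i : ℝ) < r * nstar := by
  have hnpos : (0:ℝ) < nstar := by
    have : 1 ≤ nstar := le_trans hb hbn
    exact_mod_cast this
  intro i hi
  rcases hstar with ⟨h1, h2⟩ | ⟨h1, h2⟩
  · have hle : (a i : ℝ) ≤ nstar := by
      have := haN i hi
      subst h2
      exact_mod_cast this
    nlinarith
  · have key : ∀ j, j < k → (a j : ℝ) < nstar := by
      intro j hj
      by_contra h
      push_neg at h
      have hle : nstar ≤ a j := by exact_mod_cast h
      have := hu hle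
      linarith [hcond j hj]
    cases i with
    | zero =>
      have h0 : (a 0 : ℝ) ≤ nstar := by rw [ha0]; exact_mod_cast hbn
      nlinarith
    | succ j =>
      have hj : j < k := hi
      have h1 := hgrow j hj
      have h2 := key j hj
      nlinarith
end

section
/- Let f, f* : ℕ → [0,1] with f well-behaved (non-decreasing, non-increasing discrete derivative f'), N ∈ ℕ, Δ ∈ (0,1], and suppose f*(N) - f(N) ≥ Δ (the learner is (N,Δ)-suboptimal). Define n^Δ := N if f'(N) > Δ/N, else n^Δ := min{ℓ : f'(ℓ) ≤ Δ/N}. Then the projected upper bound at n^Δ satisfies f(n^Δ) + (N - n^Δ)·f'(n^Δ) < f*(N). -/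
/-- For an `(N,Δ)`-suboptimal learner with well-behaved accuracy function `f`,
the projected upper bound at `n^Δ` is strictly below the target `f* N`. -/
theorem stmt_8 (f fstar : ℕ → ℝ)
    (hrange : ∀ n, f n ∈ Set.Icc (0 : ℝ) 1)
    (hrange' : ∀ n, fstar n ∈ Set.Icc (0 : ℝ) 1)
    (hmono : Monotone f)
    (hd : ∀ n m : ℕ, 1 ≤ n → n ≤ m → f m - f (m - 1) ≤ f n - f (n - 1))
    (N : ℕ) (hN : 1 ≤ N) (Δ : ℝ) (hΔ : 0 < Δ) (hΔ1 : Δ ≤ 1)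
    (hsub : Δ ≤ fstar N - f N)
    (nD : ℕ) (hnD1 : 1 ≤ nD) (hnDN : nD ≤ N)
    (hchar : (Δ / N < f N - f (N - 1) ∧ nD = N) ∨
      (f nD - f (nD - 1) ≤ Δ / N ∧
        ∀ ℓ, 1 ≤ ℓ → ℓ < nD → Δ / N < f ℓ - f (ℓ - 1))) :
    f nD + ((N : ℝ) - nD) * (f nD - f (nD - 1)) < fstar N := by
  have hNpos : (0:ℝ) < N := by exact_mod_cast hN
  rcases hchar with ⟨_, hEq⟩ | ⟨hle, _⟩
  · subst hEq
    simp only [sub_self, zero_mul, add_zero]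
    linarith
  · have h1 : f nD ≤ f N := hmono hnDN
    have h2 : (0:ℝ) ≤ (N : ℝ) - nD := by
      have : (nD:ℝ) ≤ N := by exact_mod_cast hnDN
      linarith
    have h3 : ((N : ℝ) - nD) * (f nD - f (nD - 1)) ≤ ((N : ℝ) - nD) * (Δ / N) :=
      mul_le_mul_of_nonneg_left hle h2
    have h4 : ((N : ℝ) - nD) < N := by
      have : (0:ℝ) < nD := by exact_mod_cast hnD1
      linarith
    have h5 : ((N : ℝ) - nD) * (Δ / N) < N * (Δ / N) :=
      mul_lt_mul_of_pos_right h4 (div_pos hΔ hNpos)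
    have h6 : (N:ℝ) * (Δ / N) = Δ := by field_simp
    linarith
end

section
/- Let f : ℕ → [0,1] be well-behaved, N ∈ ℕ, Δ ∈ (0,1], with f*(N) - f(N) ≥ Δ, and define n* := min{ℓ ≤ N : ub(ℓ) < f*(N)} (or N if none) where ub(ℓ) := f(ℓ) + (N-ℓ)f'(ℓ), and n^Δ := min{ℓ : f'(ℓ) ≤ Δ/N} (or N if f'(N) > Δ/N). Then n* ≤ n^Δ. -/
/-- `n* ≤ n^Δ`: the first point where the projected upper bound
`ub ℓ = f ℓ + (N-ℓ)(f ℓ - f (ℓ-1))` drops below the target `f* N` is no larger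
than the first point where the discrete derivative drops to `Δ/N`. -/
theorem stmt_9 (f fstar : ℕ → ℝ)
    (hrange : ∀ n, f n ∈ Set.Icc (0 : ℝ) 1)
    (hrange' : ∀ n, fstar n ∈ Set.Icc (0 : ℝ) 1)
    (hmono : Monotone f)
    (hd : ∀ n m : ℕ, 1 ≤ n → n ≤ m → f m - f (m - 1) ≤ f n - f (n - 1))
    (N : ℕ) (hN : 1 ≤ N) (Δ : ℝ) (hΔ : 0 < Δ) (hΔ1 : Δ ≤ 1)
    (hsub : Δ ≤ fstar N - f N)
    (nD : ℕ) (hnD1 : 1 ≤ nD) (hnDN : nD ≤ N)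
    (hcharD : (Δ / N < f N - f (N - 1) ∧ nD = N) ∨
      (f nD - f (nD - 1) ≤ Δ / N ∧
        ∀ ℓ, 1 ≤ ℓ → ℓ < nD → Δ / N < f ℓ - f (ℓ - 1)))
    (nstar : ℕ)
    (hmin : ∀ ℓ : ℕ, 1 ≤ ℓ → ℓ ≤ N →
      f ℓ + ((N : ℝ) - ℓ) * (f ℓ - f (ℓ - 1)) < fstar N → nstar ≤ ℓ) :
    nstar ≤ nD := by
  apply hmin nD hnD1 hnDN
  have hNpos : (0:ℝ) < N := by exact_mod_cast hN
  have hnDr : (nD:ℝ) ≤ N := by exact_mod_cast hnDN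
  have h1r : (1:ℝ) ≤ nD := by exact_mod_cast hnD1
  rcases hcharD with ⟨_, hEq⟩ | ⟨hle, _⟩
  · subst hEq
    simp only [sub_self, zero_mul, add_zero]
    linarith
  · have hfle : f nD ≤ f N := hmono hnDN
    have hnn : (0:ℝ) ≤ (N:ℝ) - nD := by linarith
    have h2 : ((N:ℝ) - nD) * (f nD - f (nD - 1)) ≤ ((N:ℝ) - nD) * (Δ / N) :=
      mul_le_mul_of_nonneg_left hle hnn
    have h3 : ((N:ℝ) - nD) * (Δ / N) ≤ Δ - Δ / N := by
      have hid : (N:ℝ) * (Δ / N) = Δ := mul_div_cancel₀ Δ (ne_of_gt hNpos)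
      nlinarith [mul_le_mul_of_nonneg_right h1r (le_of_lt (div_pos hΔ hNpos))]
    have h4 : 0 < Δ / N := div_pos hΔ hNpos
    linarith
end

section
/- Let f : ℕ → [0,1] be well-behaved (non-decreasing with non-increasing discrete derivative f'), let Δ ∈ (0,1] be fixed, and assume f'(N) ≤ Δ/N for all large N. Define n^Δ(N) := min{ℓ : f'(ℓ) ≤ Δ/N}. Then n^Δ(N)/N → 0 as N → ∞. -/
/-- For a single well-behaved `f : ℕ → [0,1]` and fixed `Δ ∈ (0,1]`, with
`f'(N) ≤ Δ/N` for all large `N`, the threshold `n^Δ(N)` (first `ℓ` with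
`f'(ℓ) ≤ Δ/N`) satisfies `n^Δ(N)/N → 0`. -/
theorem stmt_10 (f : ℕ → ℝ)
    (hrange : ∀ n, f n ∈ Set.Icc (0 : ℝ) 1)
    (hmono : Monotone f)
    (hd : ∀ n m : ℕ, 1 ≤ n → n ≤ m → f m - f (m - 1) ≤ f n - f (n - 1))
    (Δ : ℝ) (hΔ : 0 < Δ) (hΔ1 : Δ ≤ 1)
    (hlarge : ∃ N₀ : ℕ, ∀ N : ℕ, N₀ ≤ N → f N - f (N - 1) ≤ Δ / N)
    (nD : ℕ → ℕ)
    (hchar : ∀ N : ℕ, 1 ≤ N →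
      f (nD N) - f (nD N - 1) ≤ Δ / N ∧
        ∀ ℓ, 1 ≤ ℓ → ℓ < nD N → Δ / N < f ℓ - f (ℓ - 1)) :
    Filter.Tendsto (fun N : ℕ => (nD N : ℝ) / N) Filter.atTop (nhds 0) := by
  have hd0 : ∀ n : ℕ, 1 ≤ n → 0 ≤ f n - f (n - 1) := by
    intro n hn
    have := hmono (Nat.sub_le n 1)
    linarith
  -- telescoping sum
  have htel : ∀ m n : ℕ, m ≤ n →
      ∑ k ∈ Finset.Ioc m n, (f k - f (k - 1)) = f n - f m := by
    intro m n h
    induction n, h using Nat.le_induction with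
    | base => simp
    | succ n hn ih =>
      rw [Finset.sum_Ioc_succ_top (by omega), ih]
      have : n + 1 - 1 = n := by omega
      rw [this]; ring
  -- key bound: for n ≥ 2m+1, n * f'(n) ≤ 2*(f n - f m)
  have hkey : ∀ m n : ℕ, 2 * m + 1 ≤ n →
      (n : ℝ) * (f n - f (n - 1)) ≤ 2 * (f n - f m) := by
    intro m n hmn
    have hmn' : m ≤ n := by omega
    have hterm : ∀ k ∈ Finset.Ioc m n, f n - f (n - 1) ≤ f k - f (k - 1) := by
      intro k hk
      simp only [Finset.mem_Ioc] at hk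
      exact hd k n (by omega) hk.2
    have hcard : (Finset.Ioc m n).card = n - m := Nat.card_Ioc m n
    have hsum : ((n - m : ℕ) : ℝ) * (f n - f (n - 1)) ≤ f n - f m := by
      rw [← htel m n hmn', ← hcard]
      have := Finset.card_nsmul_le_sum (Finset.Ioc m n)
        (fun k => f k - f (k - 1)) (f n - f (n - 1)) hterm
      simpa [nsmul_eq_mul] using this
    have h1 : (n : ℝ) ≤ 2 * ((n - m : ℕ) : ℝ) := by
      have : (n : ℝ) = ((n : ℕ) : ℝ) := rfl
      push_cast [Nat.cast_sub hmn']
      have : (m : ℝ) ≤ n := by exact_mod_cast hmn'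
      have h2 : (2 * m + 1 : ℝ) ≤ n := by exact_mod_cast hmn
      linarith
    have h0 : 0 ≤ f n - f (n - 1) := hd0 n (by omega)
    nlinarith
  -- the sup
  set L := sSup (Set.range f) with hL
  have hbdd : BddAbove (Set.range f) := by
    refine ⟨1, ?_⟩
    rintro x ⟨n, rfl⟩
    exact (hrange n).2
  have hub : ∀ n, f n ≤ L := fun n => le_csSup hbdd ⟨n, rfl⟩
  rw [Metric.tendsto_atTop]
  intro ε hε
  -- choose m with L - f m < ε/2 * Δ / 2
  have hδ : 0 < ε / 2 * Δ / 2 := by positivity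
  obtain ⟨x, ⟨m, rfl⟩, hm⟩ := exists_lt_of_lt_csSup (Set.range_nonempty f)
    (show L - ε / 2 * Δ / 2 < L by linarith)
  -- choose N₀
  obtain ⟨N₁, hN₁⟩ := exists_nat_gt ((2 * m + 2 : ℝ) / (ε / 2))
  refine ⟨max 1 N₁, fun N hN => ?_⟩
  have hN1 : 1 ≤ N := le_trans (le_max_left _ _) hN
  have hNpos : (0 : ℝ) < N := by exact_mod_cast hN1
  set ℓ : ℕ := 2 * m + 1 + Nat.ceil (ε / 2 * N) with hℓ
  have hℓ1 : 1 ≤ ℓ := by omega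
  have hℓge : ε / 2 * N ≤ (ℓ : ℝ) := by
    have hm0 : (0 : ℝ) ≤ (m : ℝ) := Nat.cast_nonneg m
    push_cast [hℓ]
    linarith [Nat.le_ceil (ε / 2 * (N : ℝ))]
  -- f'(ℓ) ≤ Δ / N
  have hfl : f ℓ - f (ℓ - 1) ≤ Δ / N := by
    have hk := hkey m ℓ (by omega)
    have hfm : f ℓ - f m ≤ ε / 2 * Δ / 2 := by
      have := hub ℓ; linarith
    have hℓpos : (0 : ℝ) < ℓ := by positivity
    have h1 : (ℓ : ℝ) * (f ℓ - f (ℓ - 1)) ≤ ε / 2 * Δ := by nlinarith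
    have h2 : ε / 2 * Δ ≤ (ℓ : ℝ) * (Δ / N) := by
      have heq : ε / 2 * Δ = (ε / 2 * N) * (Δ / N) := by
        field_simp
      rw [heq]
      exact mul_le_mul_of_nonneg_right hℓge (by positivity)
    have := h1.trans h2
    exact le_of_mul_le_mul_left this hℓpos
  -- hence nD N ≤ ℓ
  have hnD : nD N ≤ ℓ := by
    by_contra h
    push_neg at h
    exact absurd hfl (not_le.mpr ((hchar N hN1).2 ℓ hℓ1 h))
  -- conclude
  rw [Real.dist_eq, sub_zero, abs_of_nonneg (by positivity)]
  have hceil : (Nat.ceil (ε / 2 * N) : ℝ) ≤ ε / 2 * N + 1 := by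
    have := Nat.ceil_lt_add_one (show (0:ℝ) ≤ ε / 2 * N by positivity)
    linarith
  have hℓle : (ℓ : ℝ) ≤ 2 * m + 2 + ε / 2 * N := by
    push_cast [hℓ]; linarith
  have hNN : (N₁ : ℝ) ≤ N := by exact_mod_cast le_trans (le_max_right _ _) hN
  have h2m : (2 * m + 2 : ℝ) / (ε / 2) < N := lt_of_lt_of_le hN₁ hNN
  have h2m' : (2 * m + 2 : ℝ) < ε / 2 * N := by
    rw [div_lt_iff₀ (by positivity)] at h2m
    linarith
  have : (nD N : ℝ) ≤ ℓ := by exact_mod_cast hnD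
  rw [div_lt_iff₀ hNpos]
  calc (nD N : ℝ) ≤ 2 * m + 2 + ε / 2 * N := by linarith
    _ < ε / 2 * N + ε / 2 * N := by linarith
    _ = ε * N := by ring
end

section
/- Let u₁, ..., u_M : [N] → [0,1] be non-increasing functions, and let f* ∈ [0,1] with u_{i*}(n) ≥ f* for all n (a valid upper bound for the optimal learner i*). Consider any process that repeatedly selects j = argmax_i u_i(n_i) (current allocations n_i) and increases n_j. Then for any j with u_j(m) < f* at some point m ≤ n_j, learner j is never selected again after its allocation reaches m, so its allocation does not increase after that point. -/
/-- DAUB* invariant: with non-increasing upper bounds `u i`, a valid bound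
`u i* ≥ f*` for the optimal learner, and an argmax selection rule, once
`u j m < f*` for some `m ≤` the current allocation of `j`, learner `j` is
never selected again and its allocation never increases. -/
theorem stmt_17 (M : ℕ) (u : Fin M → ℕ → ℝ) (hu : ∀ i, Antitone (u i))
    (fstar : ℝ) (istar : Fin M) (hopt : ∀ n : ℕ, fstar ≤ u istar n)
    (alloc : ℕ → Fin M → ℕ) (sel : ℕ → Fin M)
    (hsel : ∀ t : ℕ, ∀ i : Fin M,
      u i (alloc t i) ≤ u (sel t) (alloc t (sel t)))
    (hupd : ∀ t : ℕ, alloc t (sel t) < alloc (t + 1) (sel t))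
    (hfix : ∀ t : ℕ, ∀ i : Fin M, i ≠ sel t → alloc (t + 1) i = alloc t i)
    (j : Fin M) (t₀ m : ℕ) (hm : m ≤ alloc t₀ j) (hj : u j m < fstar) :
    ∀ t : ℕ, t₀ ≤ t → alloc t j = alloc t₀ j := by
  intro t ht
  induction t with
  | zero => have : t₀ = 0 := Nat.le_zero.mp ht; rw [this]
  | succ t ih =>
    rcases Nat.lt_or_ge t₀ (t+1) with h | h
    · have ht' : t₀ ≤ t := Nat.lt_succ_iff.mp h
      have hEq := ih ht'
      have hne : j ≠ sel t := by
        intro hjs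
        have h1 : u j (alloc t j) ≤ u j m := by
          apply hu; omega
        have h2 := hsel t istar
        rw [← hjs] at h2
        have := hopt (alloc t istar)
        linarith
      rw [hfix t j hne, hEq]
    · rw [show t₀ = t+1 from Nat.le_antisymm ht h]
end
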